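/- arXiv:1302.0968 — 5 statements merged into one kernel-verified Lean document; each statement's English description precedes it below -/
import Mathlib

section
/- For every dimension d ≥ 1 and every T > 0 there exists a constant c > 0 such that p_t(x + y) ≤ c · p_{t+h}(x) for all x, y ∈ ℝ^d and all reals h, t satisfying |y| ≤ h ≤ t ≤ T. -/
/-!
Comparing `p_t(x + y)` with `p_{t+h}(x)`: the normalising constants differ by a factor at most
`2^{d/2}` because `t ≤ t + h ≤ 2t`, and in the exponent, by the Peter–Paul inequality
`‖x‖² ≤ (1 + h/t) ‖x + y‖² + (1 + t/h) ‖y‖²`,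
`‖x‖² / (2(t + h)) ≤ ‖x + y‖² / (2t) + ‖y‖² / (2h) ≤ ‖x + y‖² / (2t) + h / 2`.
Hence `c = 2^{d/2} e^{T/2}` works. When `t = 0` the hypotheses force
`h = 0` and `y = 0`, so the junk-valued sides coincide and `c ≥ 1` suffices.
-/

/-- The centered Gaussian density on `ℝ^d` with variance `t` in each coordinate. -/
noncomputable def gaussDensity (d : ℕ) (t : ℝ) (x : EuclideanSpace ℝ (Fin d)) : ℝ :=
  (2 * Real.pi * t) ^ (-(d : ℝ) / 2) * Real.exp (-‖x‖ ^ 2 / (2 * t))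

open Real

theorem sq_div_le_sq_div_add_half {r a s h t : ℝ} (ht : 0 < t) (hs : 0 ≤ s) (hsh : s ≤ h)
    (hr : 0 ≤ r) (hra : r ≤ a + s) :
    r ^ 2 / (2 * (t + h)) ≤ a ^ 2 / (2 * t) + h / 2 := by
  rw [div_add_div _ _ (by positivity) two_ne_zero, div_le_div_iff₀ (by linarith) (by positivity)]
  have hr2 : r ^ 2 ≤ (a + s) ^ 2 := pow_le_pow_left₀ hr hra 2
  suffices 0 ≤ (t + h) * a ^ 2 + t * h * (t + h) - t * r ^ 2 by nlinarith
  rcases (hs.trans hsh).eq_or_lt with rfl | hh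
  · obtain rfl : s = 0 := le_antisymm hsh hs
    nlinarith [mul_le_mul_of_nonneg_left hr2 ht.le]
  · refine nonneg_of_mul_nonneg_right ?_ hh
    nlinarith [sq_nonneg (h * a - t * s), mul_le_mul_of_nonneg_left hr2 (mul_pos ht hh).le,
      mul_nonneg (mul_pos ht (add_pos ht hh)).le (sub_nonneg.2 (mul_le_mul hsh hsh hs hh.le))]

theorem norm_sq_div_le_norm_add_sq_div {E : Type*} [SeminormedAddCommGroup E] (x y : E)
    {h t : ℝ} (ht : 0 < t) (hy : ‖y‖ ≤ h) :
    ‖x‖ ^ 2 / (2 * (t + h)) ≤ ‖x + y‖ ^ 2 / (2 * t) + h / 2 :=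
  sq_div_le_sq_div_add_half ht (norm_nonneg y) hy (norm_nonneg x)
    (by simpa using norm_sub_le (x + y) y)

theorem rpow_le_rpow_mul_of_le_mul {a b k e : ℝ} (ha : 0 < a) (hb : 0 < b) (hk : 0 < k)
    (hba : b ≤ k * a) (he : e ≤ 0) : a ^ e ≤ k ^ (-e) * b ^ e :=
  calc a ^ e = k ^ (-e) * (k * a) ^ e := by
        rw [mul_rpow hk.le ha.le, ← mul_assoc, ← rpow_add hk, neg_add_cancel, rpow_zero, one_mul]
    _ ≤ k ^ (-e) * b ^ e :=
        mul_le_mul_of_nonneg_left (rpow_le_rpow_of_nonpos hb hba he) (by positivity)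

theorem gaussDensity_nonneg (d : ℕ) {t : ℝ} (ht : 0 ≤ t) (x : EuclideanSpace ℝ (Fin d)) :
    0 ≤ gaussDensity d t x := by
  unfold gaussDensity
  positivity

theorem gaussDensity_add_le {d : ℕ} {h t : ℝ} (x y : EuclideanSpace ℝ (Fin d)) (ht : 0 < t)
    (hy : ‖y‖ ≤ h) (hht : h ≤ t) :
    gaussDensity d t (x + y) ≤ 2 ^ ((d : ℝ) / 2) * exp (h / 2) * gaussDensity d (t + h) x := by
  have hh : 0 ≤ h := (norm_nonneg y).trans hy
  have hconst : (2 * π * t) ^ (-(d : ℝ) / 2) ≤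
      2 ^ ((d : ℝ) / 2) * (2 * π * (t + h)) ^ (-(d : ℝ) / 2) := by
    have := rpow_le_rpow_mul_of_le_mul (a := 2 * π * t) (b := 2 * π * (t + h)) (k := 2)
      (e := -(d : ℝ) / 2) (by positivity) (by positivity) two_pos (by nlinarith [pi_pos])
      (by have := d.cast_nonneg (α := ℝ); linarith)
    rwa [show -(-(d : ℝ) / 2) = d / 2 by ring] at this
  have hexp : exp (-‖x + y‖ ^ 2 / (2 * t)) ≤ exp (h / 2) * exp (-‖x‖ ^ 2 / (2 * (t + h))) := by
    rw [← exp_add, exp_le_exp, neg_div, neg_div]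
    linarith [norm_sq_div_le_norm_add_sq_div x y ht hy]
  calc gaussDensity d t (x + y)
      ≤ (2 ^ ((d : ℝ) / 2) * (2 * π * (t + h)) ^ (-(d : ℝ) / 2)) *
          (exp (h / 2) * exp (-‖x‖ ^ 2 / (2 * (t + h)))) :=
        mul_le_mul hconst hexp (by positivity) (by positivity)
    _ = 2 ^ ((d : ℝ) / 2) * exp (h / 2) * gaussDensity d (t + h) x := by
        unfold gaussDensity
        ring

theorem stmt_3_general (d : ℕ) (T : ℝ) :
    ∃ c : ℝ, 0 < c ∧ ∀ (x y : EuclideanSpace ℝ (Fin d)) (h t : ℝ),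
      ‖y‖ ≤ h → h ≤ t → t ≤ T → gaussDensity d t (x + y) ≤ c * gaussDensity d (t + h) x := by
  refine ⟨2 ^ ((d : ℝ) / 2) * exp (T / 2), by positivity, fun x y h t hy hht htT ↦ ?_⟩
  have hh : 0 ≤ h := (norm_nonneg y).trans hy
  rcases (hh.trans hht).eq_or_lt with rfl | ht
  · obtain rfl : h = 0 := le_antisymm hht hh
    obtain rfl : y = 0 := norm_le_zero_iff.1 hy
    have hc : 1 ≤ 2 ^ ((d : ℝ) / 2) * exp (T / 2) :=
      one_le_mul_of_one_le_of_one_le (one_le_rpow one_le_two (by positivity))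
        (one_le_exp (by linarith))
    simpa using le_mul_of_one_le_left (gaussDensity_nonneg d le_rfl x) hc
  · calc gaussDensity d t (x + y)
        ≤ 2 ^ ((d : ℝ) / 2) * exp (h / 2) * gaussDensity d (t + h) x :=
          gaussDensity_add_le x y ht hy hht
      _ ≤ 2 ^ ((d : ℝ) / 2) * exp (T / 2) * gaussDensity d (t + h) x := by
          refine mul_le_mul_of_nonneg_right ?_ (gaussDensity_nonneg d (by linarith) x)
          gcongr
          linarith

theorem stmt_3 (d : ℕ) (hd : 1 ≤ d) (T : ℝ) (hT : 0 < T) :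
    ∃ c : ℝ, 0 < c ∧ ∀ (x y : EuclideanSpace ℝ (Fin d)) (h t : ℝ),
      ‖y‖ ≤ h → h ≤ t → t ≤ T → gaussDensity d t (x + y) ≤ c * gaussDensity d (t + h) x :=
  stmt_3_general d T
end

section
/- Let U_1,…,U_n be i.i.d. random variables uniformly distributed on [0,1], let τ_1 < τ_2 < … < τ_n be their order statistics, and let φ be a random subset of {1,…,n} of fixed cardinality k (with 0 ≤ k ≤ n), uniformly distributed among all such subsets and independent of (U_1,…,U_n). Then the two random point measures Σ_{r∈φ} δ_{τ_r} and Σ_{r∉φ} δ_{τ_r} are independent, and they are distributed as uniform binomial processes on [0,1] of orders k and n−k, respectively. -/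
/-!
Almost surely `τ = U ∘ σ`, where `σ = σ(U)` is the permutation sorting `U`, so the pair
`(∑_{r ∈ φ} δ_{τ_r}, ∑_{r ∉ φ} δ_{τ_r})` is the split of the sample `U` along the index set
`σ(φ)`. Since `J ↦ σ(J)` permutes the `k`-subsets, the uniform law of
`φ` is carried to itself, whatever `U` is: averaging over `φ` the law of the split along `σ(φ)`
is the same as averaging the law of the split along a fixed `k`-subset `K` of the coordinates.
For fixed `K`, the two halves of an i.i.d. uniform vector are independent i.i.d. uniform vectors
of lengths `k` and `n - k`, whose empirical measures are the binomial processes.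

The events `{φ = J}` are not assumed measurable; they are null-measurable because the
`n.choose k` of them partition `Ω` and each has outer measure `(n.choose k)⁻¹`.
-/

open MeasureTheory ProbabilityTheory
open scoped ENNReal

/-- The law of a uniform binomial process of order `m` on the interval `[a, b]`: the distribution
of the random point measure `∑_{i=1}^{m} δ_{V_i}`, where `V_1,…,V_m` are i.i.d. uniform
on `[a, b]`. -/
noncomputable def binProcLaw (m : ℕ) (a b : ℝ) : Measure (Measure ℝ) :=
  Measure.map (fun v : Fin m → ℝ => ∑ i, Measure.dirac (v i))
    (Measure.pi fun _ => (ENNReal.ofReal (b - a))⁻¹ • volume.restrict (Set.Icc a b))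

open Finset

section SumDirac

variable {α ι : Type*} [MeasurableSpace α]

lemma measurable_sum_dirac (s : Finset ι) :
    Measurable fun v : ι → α => ∑ i ∈ s, Measure.dirac (v i) := by
  refine Measure.measurable_of_measurable_coe _ fun t ht => ?_
  simp_rw [Measure.finsetSum_apply]
  exact Finset.measurable_sum _ fun i _ =>
    ((Measure.measurable_coe ht).comp Measure.measurable_dirac).comp (measurable_pi_apply i)

variable [MeasurableSingletonClass α] [Fintype ι]

lemma sum_dirac_apply_singleton [DecidableEq α] (a : ι → α) (x : α) :
    (∑ i, Measure.dirac (a i)) {x} = #{i | a i = x} := by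
  simp [Measure.finsetSum_apply, Set.indicator, Finset.sum_boole]

lemma map_univ_val_eq_of_sum_dirac_eq {a b : ι → α}
    (h : ∑ i, Measure.dirac (a i) = ∑ i, Measure.dirac (b i)) :
    univ.val.map a = univ.val.map b := by
  classical
  ext x
  have hx := congrArg (fun μ : Measure α => μ {x}) h
  simp only [sum_dirac_apply_singleton, Nat.cast_inj] at hx
  simpa [Multiset.count_map, Finset.card_def, Finset.filter_val, eq_comm] using hx

end SumDirac

section OrderStatistics

variable {α : Type*} [LinearOrder α] {n : ℕ}

def orderStatistics (u : Fin n → α) : Fin n → α := u ∘ Tuple.sort u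

lemma eq_orderStatistics_of_sum_dirac_eq [MeasurableSpace α] [MeasurableSingletonClass α]
    {a u : Fin n → α} (ha : Monotone a)
    (h : ∑ i, Measure.dirac (a i) = ∑ i, Measure.dirac (u i)) : a = orderStatistics u := by
  have hperm : (List.ofFn a).Perm (List.ofFn u) := by
    simpa using map_univ_val_eq_of_sum_dirac_eq h
  exact List.ofFn_injective <| (hperm.trans ((Tuple.sort u).ofFn_comp_perm u).symm).eq_of_sortedLE
    ha.sortedLE_ofFn (Tuple.monotone_sort u).sortedLE_ofFn

variable [TopologicalSpace α] [OrderClosedTopology α] [SecondCountableTopology α]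
  [MeasurableSpace α] [OpensMeasurableSpace α]

lemma measurableSet_sort_eq (σ : Equiv.Perm (Fin n)) :
    MeasurableSet {u : Fin n → α | Tuple.sort u = σ} := by
  simp only [eq_comm (a := Tuple.sort _), Tuple.eq_sort_iff, Monotone, Function.comp_apply]
  have hle (i j : Fin n) : Measurable fun u : Fin n → α => u (σ i) ≤ u (σ j) :=
    measurableSet_setOfPred.1 (measurableSet_le (measurable_pi_apply _) (measurable_pi_apply _))
  have heq (i j : Fin n) : Measurable fun u : Fin n → α => u (σ i) = u (σ j) :=
    measurableSet_setOfPred.1 (measurableSet_eq_fun (measurable_pi_apply _) (measurable_pi_apply _))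
  refine .inter ?_ ?_ <;> refine measurableSet_setOfPred.2 ?_
  · exact .forall fun i => .forall fun j => measurable_const.imp (hle i j)
  · exact .forall fun i => .forall fun j => measurable_const.imp ((heq i j).imp measurable_const)

lemma measurable_orderStatistics : Measurable (orderStatistics : (Fin n → α) → Fin n → α) := by
  intro s hs
  have hpieces : orderStatistics ⁻¹' s = ⋃ σ : Equiv.Perm (Fin n),
      {u : Fin n → α | Tuple.sort u = σ} ∩ (fun u => u ∘ σ) ⁻¹' s := by
    ext u
    simp [orderStatistics]
  rw [hpieces]
  exact .iUnion fun σ => (measurableSet_sort_eq σ).inter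
    ((measurable_pi_lambda _ fun i => measurable_pi_apply (σ i)) hs)

end OrderStatistics

section SplitSumDirac

variable {α ι : Type*} [MeasurableSpace α] [Fintype ι]

lemma sum_powersetCard_map_perm {M : Type*} [AddCommMonoid M] (k : ℕ) (σ : Equiv.Perm ι)
    (f : Finset ι → M) :
    ∑ J ∈ powersetCard k univ, f (J.map σ.toEmbedding) = ∑ J ∈ powersetCard k univ, f J := by
  conv_rhs => rw [← Finset.map_univ_equiv σ, Finset.powersetCard_map, Finset.sum_map]
  rfl

variable [DecidableEq ι]

noncomputable def splitSumDirac (J : Finset ι) (v : ι → α) : Measure α × Measure α :=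
  (∑ i ∈ J, Measure.dirac (v i), ∑ i ∈ Jᶜ, Measure.dirac (v i))

lemma measurable_splitSumDirac (J : Finset ι) :
    Measurable (splitSumDirac J : (ι → α) → Measure α × Measure α) :=
  (measurable_sum_dirac J).prodMk (measurable_sum_dirac Jᶜ)

lemma splitSumDirac_comp_perm (J : Finset ι) (v : ι → α) (σ : Equiv.Perm ι) :
    splitSumDirac J (v ∘ σ) = splitSumDirac (J.map σ.toEmbedding) v := by
  have hcompl : (J.map σ.toEmbedding)ᶜ = Jᶜ.map σ.toEmbedding := by
    ext i
    simp [Finset.mem_map_equiv]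
  simp [splitSumDirac, hcompl, Finset.sum_map]

end SplitSumDirac

section BinomialProcess

variable {α ι : Type*} [MeasurableSpace α] [Fintype ι]

noncomputable def binomialProcess (μ : Measure α) (m : ℕ) : Measure (Measure α) :=
  (Measure.pi fun _ : Fin m => μ).map fun v => ∑ i, Measure.dirac (v i)

instance (μ : Measure α) [IsProbabilityMeasure μ] (m : ℕ) :
    IsProbabilityMeasure (binomialProcess μ m) :=
  Measure.isProbabilityMeasure_map (measurable_sum_dirac _).aemeasurable

lemma map_sum_dirac_pi (μ : Measure α) [SigmaFinite μ] :
    (Measure.pi fun _ : ι => μ).map (fun v => ∑ i, Measure.dirac (v i)) =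
      binomialProcess μ (Fintype.card ι) := by
  rw [binomialProcess, ← (measurePreserving_piCongrLeft (fun _ => μ) (Fintype.equivFin ι)).map_eq,
    Measure.map_map (measurable_sum_dirac _) (MeasurableEquiv.measurable _)]
  congr 1
  funext v
  simp only [Function.comp_apply, MeasurableEquiv.coe_piCongrLeft]
  rw [← Equiv.sum_comp (Fintype.equivFin ι)]
  simp

lemma map_splitSumDirac_pi [DecidableEq ι] (K : Finset ι) (μ : Measure α) [SigmaFinite μ] :
    (Measure.pi fun _ : ι => μ).map (splitSumDirac K) =
      (binomialProcess μ #K).prod (binomialProcess μ (Fintype.card ι - #K)) := by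
  have hsplit : splitSumDirac K = Prod.map (fun v : {i // i ∈ K} → α => ∑ i, Measure.dirac (v i))
      (fun v : {i // i ∉ K} → α => ∑ i, Measure.dirac (v i)) ∘
        MeasurableEquiv.piEquivPiSubtypeProd (fun _ => α) (· ∈ K) := by
    funext v
    simp only [splitSumDirac, Function.comp_apply]
    simp [MeasurableEquiv.piEquivPiSubtypeProd, Finset.sum_subtype Kᶜ (fun _ => Finset.mem_compl)]
    exact (Finset.sum_attach K fun i => Measure.dirac (v i)).symm
  rw [hsplit, ← Measure.map_map ((measurable_sum_dirac _).prodMap (measurable_sum_dirac _))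
    (MeasurableEquiv.measurable _), (measurePreserving_piEquivPiSubtypeProd _ _).map_eq,
    ← Measure.map_prod_map _ _ (measurable_sum_dirac _) (measurable_sum_dirac _)]
  -- `convert` reconciles the two `Fintype` instances on each subtype
  congr 1
  · convert map_sum_dirac_pi (ι := {i // i ∈ K}) μ using 3
    exact (Fintype.card_coe K).symm
  · convert map_sum_dirac_pi (ι := {i // i ∉ K}) μ using 3
    rw [Fintype.card_subtype_compl, Fintype.card_coe]

lemma binProcLaw_zero_one (m : ℕ) :
    binProcLaw m 0 1 = binomialProcess (volume.restrict (Set.Icc (0 : ℝ) 1)) m := by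
  simp [binProcLaw, binomialProcess]

end BinomialProcess

section UniformSubset

variable {n : ℕ}

noncomputable def uniformSubsetLaw (n k : ℕ) : Measure (Finset (Fin n)) :=
  ∑ J ∈ powersetCard k univ, (n.choose k : ℝ≥0∞)⁻¹ • Measure.dirac J

lemma lintegral_uniformSubsetLaw (k : ℕ) (f : Finset (Fin n) → ℝ≥0∞) :
    ∫⁻ J, f J ∂uniformSubsetLaw n k = (n.choose k : ℝ≥0∞)⁻¹ * ∑ J ∈ powersetCard k univ, f J := by
  simp [uniformSubsetLaw, lintegral_finsetSum_measure, Finset.mul_sum]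

instance (k : ℕ) : IsFiniteMeasure (uniformSubsetLaw n k) := by
  refine ⟨?_⟩
  simp only [uniformSubsetLaw, Measure.finsetSum_apply, Measure.smul_apply, measure_univ,
    smul_eq_mul, mul_one, sum_const, card_powersetCard, card_univ, Fintype.card_fin, nsmul_eq_mul]
  exact (ENNReal.mul_inv_le_one _).trans_lt ENNReal.one_lt_top

lemma uniformSubsetLaw_singleton (k : ℕ) (J : Finset (Fin n)) :
    uniformSubsetLaw n k {J} = if #J = k then (n.choose k : ℝ≥0∞)⁻¹ else 0 := by
  rw [← lintegral_indicator_one (measurableSet_singleton J), lintegral_uniformSubsetLaw]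
  simp [Set.indicator_apply, mem_powersetCard, eq_comm]

variable {α : Type*} [LinearOrder α] [TopologicalSpace α] [OrderClosedTopology α]
  [SecondCountableTopology α] [MeasurableSpace α] [OpensMeasurableSpace α]

lemma measurable_splitSumDirac_orderStatistics :
    Measurable fun p : Finset (Fin n) × (Fin n → α) => splitSumDirac p.1 (orderStatistics p.2) :=
  measurable_from_prod_countable_right fun J =>
    (measurable_splitSumDirac J).comp measurable_orderStatistics

lemma sum_measure_splitSumDirac_orderStatistics_preimage (ρ : Measure (Fin n → α)) (k : ℕ)
    {A : Set (Measure α × Measure α)} (hA : MeasurableSet A) :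
    ∑ J ∈ powersetCard k univ, ρ ((fun u => splitSumDirac J (orderStatistics u)) ⁻¹' A) =
      ∑ K ∈ powersetCard k univ, ρ (splitSumDirac K ⁻¹' A) := by
  have hind {f : (Fin n → α) → Measure α × Measure α} (hf : Measurable f) :
      Measurable fun u => A.indicator (1 : Measure α × Measure α → ℝ≥0∞) (f u) :=
    (measurable_one.indicator hA).comp hf
  have hmeas (J : Finset (Fin n)) :
      Measurable fun u : Fin n → α => splitSumDirac J (orderStatistics u) :=
    (measurable_splitSumDirac J).comp measurable_orderStatistics
  calc ∑ J ∈ powersetCard k univ, ρ ((fun u => splitSumDirac J (orderStatistics u)) ⁻¹' A)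
      = ∫⁻ u, ∑ J ∈ powersetCard k univ,
          A.indicator 1 (splitSumDirac J (orderStatistics u)) ∂ρ := by
        rw [lintegral_finsetSum _ fun J _ => hind (hmeas J)]
        exact Finset.sum_congr rfl fun J _ => (lintegral_indicator_one (hmeas J hA)).symm
    _ = ∫⁻ u, ∑ K ∈ powersetCard k univ, A.indicator 1 (splitSumDirac K u) ∂ρ := by
        refine lintegral_congr fun u => ?_
        simp only [orderStatistics, splitSumDirac_comp_perm]
        exact sum_powersetCard_map_perm k (Tuple.sort u) fun K => A.indicator 1 (splitSumDirac K u)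
    _ = ∑ K ∈ powersetCard k univ, ρ (splitSumDirac K ⁻¹' A) := by
        rw [lintegral_finsetSum _ fun K _ => hind (measurable_splitSumDirac K)]
        exact Finset.sum_congr rfl fun K _ =>
          lintegral_indicator_one (measurable_splitSumDirac K hA)

theorem map_splitSumDirac_orderStatistics {k : ℕ} (hk : k ≤ n) (μ : Measure α) [SigmaFinite μ] :
    ((uniformSubsetLaw n k).prod (Measure.pi fun _ : Fin n => μ)).map
        (fun p => splitSumDirac p.1 (orderStatistics p.2)) =
      (binomialProcess μ k).prod (binomialProcess μ (n - k)) := by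
  ext A hA
  have hG := measurable_splitSumDirac_orderStatistics (n := n) (α := α)
  have hK (K : Finset (Fin n)) (hK : K ∈ powersetCard k univ) :
      Measure.pi (fun _ => μ) (splitSumDirac K ⁻¹' A) =
        (binomialProcess μ k).prod (binomialProcess μ (n - k)) A := by
    rw [← Measure.map_apply (measurable_splitSumDirac K) hA, map_splitSumDirac_pi,
      (mem_powersetCard.1 hK).2, Fintype.card_fin]
  rw [Measure.map_apply hG hA, Measure.prod_apply (hG hA), lintegral_uniformSubsetLaw]
  simp only [Set.preimage_preimage]
  rw [sum_measure_splitSumDirac_orderStatistics_preimage _ k hA, Finset.sum_congr rfl hK,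
    sum_const, card_powersetCard, card_univ, Fintype.card_fin, nsmul_eq_mul]
  exact ENNReal.inv_mul_cancel_left (by exact_mod_cast (Nat.choose_pos hk).ne')
    (ENNReal.natCast_ne_top _)

end UniformSubset

section OuterMeasure

variable {Ω β : Type*} [MeasurableSpace Ω] {μ : Measure Ω} [IsFiniteMeasure μ]

lemma nullMeasurableSet_of_measure_add_measure_compl_le {s : Set Ω}
    (h : μ s + μ sᶜ ≤ μ Set.univ) : NullMeasurableSet s μ := by
  obtain ⟨t, hst, ht, hts⟩ : ∃ t ⊇ s, MeasurableSet t ∧ μ t = μ s :=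
    ⟨_, subset_toMeasurable μ s, measurableSet_toMeasurable μ s, measure_toMeasurable s⟩
  have hsplit : μ (t \ s) + μ tᶜ = μ sᶜ := by
    have hcompl : sᶜ \ t = tᶜ := by
      ext x
      exact ⟨fun hx => hx.2, fun hx => ⟨fun hs => hx (hst hs), hx⟩⟩
    rw [← measure_inter_add_sdiff sᶜ ht, hcompl, Set.inter_comm, Set.sdiff_eq]
  have hnull : μ (t \ s) + μ tᶜ ≤ 0 + μ tᶜ := by
    refine ENNReal.le_of_add_le_add_left (measure_ne_top μ t) ?_
    rw [hsplit, zero_add, measure_add_measure_compl ht, hts]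
    exact h
  refine ht.nullMeasurableSet.congr (ae_eq_set.2 ⟨?_, ?_⟩).symm
  · simp [Set.sdiff_eq_empty.2 hst]
  · exact nonpos_iff_eq_zero.1 (ENNReal.le_of_add_le_add_right (measure_ne_top μ _) hnull)

lemma aemeasurable_of_sum_measure_fiber_le [MeasurableSpace β] [Countable β]
    [MeasurableSingletonClass β] {f : Ω → β} (s : Finset β) (hs : ∀ ω, f ω ∈ s)
    (h : ∑ b ∈ s, μ {ω | f ω = b} ≤ μ Set.univ) : AEMeasurable f μ := by
  classical
  suffices hfiber : ∀ b, NullMeasurableSet {ω | f ω = b} μ from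
    NullMeasurable.aemeasurable (measurable_to_countable' hfiber)
  intro b
  by_cases hb : b ∈ s
  · refine nullMeasurableSet_of_measure_add_measure_compl_le (h.trans' ?_)
    rw [← Finset.add_sum_erase s _ hb]
    gcongr
    calc μ {ω | f ω = b}ᶜ ≤ μ (⋃ b' ∈ s.erase b, {ω | f ω = b'}) :=
          measure_mono fun ω hω => Set.mem_biUnion (Finset.mem_erase.2 ⟨hω, hs ω⟩) rfl
      _ ≤ ∑ b' ∈ s.erase b, μ {ω | f ω = b'} := measure_biUnion_finset_le _ _
  · have hempty : {ω | f ω = b} = ∅ :=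
      Set.eq_empty_of_forall_notMem fun ω (hω : f ω = b) => hb (hω ▸ hs ω)
    rw [hempty]
    exact MeasurableSet.empty.nullMeasurableSet

end OuterMeasure

lemma MeasureTheory.Measure.prod_eq_of_singleton_prod {β γ : Type*} [MeasurableSpace β]
    [Countable β] [MeasurableSingletonClass β] [MeasurableSpace γ] {μ : Measure β} [SigmaFinite μ]
    {ν : Measure γ} [SigmaFinite ν] {ρ : Measure (β × γ)}
    (h : ∀ b t, MeasurableSet t → ρ ({b} ×ˢ t) = μ {b} * ν t) : μ.prod ν = ρ := by
  refine Measure.prod_eq fun s t _ ht => ?_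
  have hdisj : s.PairwiseDisjoint fun b => ({b} ×ˢ t : Set (β × γ)) :=
    fun b _ b' _ hbb' => Set.disjoint_left.2 fun p hp hp' => hbb' (hp.1.symm.trans hp'.1)
  calc ρ (s ×ˢ t) = ρ (⋃ b ∈ s, {b} ×ˢ t) := by
        rw [← Set.iUnion₂_prod_const, Set.biUnion_of_singleton]
    _ = ∑' b : s, μ {(b : β)} * ν t := by
        rw [measure_biUnion s.to_countable hdisj fun b _ => (measurableSet_singleton b).prod ht]
        exact tsum_congr fun b => h b t ht
    _ = μ s * ν t := by
        rw [ENNReal.tsum_mul_right, ← measure_biUnion s.to_countable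
          (fun b _ b' _ hbb' => Set.disjoint_singleton.2 hbb') fun b _ => measurableSet_singleton b,
          Set.biUnion_of_singleton]

lemma aemeasurable_and_map_eq_uniformSubsetLaw_prod {Ω γ : Type*} [MeasurableSpace Ω] [MeasurableSpace γ]
    {P : Measure Ω} [IsProbabilityMeasure P] {n k : ℕ} {φ : Ω → Finset (Fin n)} {V : Ω → γ}
    (hV : Measurable V) (hφcard : ∀ ω, #(φ ω) = k)
    (hφunif : ∀ J : Finset (Fin n), #J = k → P {ω | φ ω = J} = (n.choose k : ℝ≥0∞)⁻¹)
    (hφindep : ∀ (J : Finset (Fin n)) (B : Set γ), MeasurableSet B →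
      P ({ω | φ ω = J} ∩ {ω | V ω ∈ B}) = P {ω | φ ω = J} * P {ω | V ω ∈ B}) :
    AEMeasurable (fun ω => (φ ω, V ω)) P ∧
      P.map (fun ω => (φ ω, V ω)) = (uniformSubsetLaw n k).prod (P.map V) := by
  have hφ : AEMeasurable φ P := by
    refine aemeasurable_of_sum_measure_fiber_le (powersetCard k univ)
      (fun ω => mem_powersetCard.2 ⟨subset_univ _, hφcard ω⟩) ?_
    rw [sum_congr rfl fun J hJ => hφunif J (mem_powersetCard.1 hJ).2, sum_const,
      card_powersetCard, card_univ, Fintype.card_fin, nsmul_eq_mul, measure_univ]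
    exact ENNReal.mul_inv_le_one _
  have hφV := hφ.prodMk hV.aemeasurable
  refine ⟨hφV, (Measure.prod_eq_of_singleton_prod fun J t ht => ?_).symm⟩
  rw [Measure.map_apply_of_aemeasurable hφV ((measurableSet_singleton J).prod ht),
    Measure.map_apply hV ht, Set.mk_preimage_prod]
  refine (hφindep J t ht).trans (congrArg (· * _) ?_)
  rw [uniformSubsetLaw_singleton]
  split_ifs with hJ
  · exact hφunif J hJ
  · have hempty : {ω | φ ω = J} = ∅ :=
      Set.eq_empty_of_forall_notMem fun ω (hω : φ ω = J) => hJ (hω ▸ hφcard ω)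
    rw [hempty, measure_empty]

lemma indepFun_and_map_eq_of_map_prod_eq {Ω α β : Type*} [MeasurableSpace Ω] [MeasurableSpace α]
    [MeasurableSpace β] {P : Measure Ω} [IsFiniteMeasure P] {X : Ω → α} {Y : Ω → β}
    {μ : Measure α} {ν : Measure β} [IsProbabilityMeasure μ] [IsProbabilityMeasure ν]
    (hXY : AEMeasurable (fun ω => (X ω, Y ω)) P) (h : P.map (fun ω => (X ω, Y ω)) = μ.prod ν) :
    IndepFun X Y P ∧ P.map X = μ ∧ P.map Y = ν := by
  have hX : P.map X = μ := by
    rw [← Measure.fst_prod (μ := μ) (ν := ν), ← h, Measure.fst,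
      AEMeasurable.map_map_of_aemeasurable measurable_fst.aemeasurable hXY]
    rfl
  have hY : P.map Y = ν := by
    rw [← Measure.snd_prod (μ := μ) (ν := ν), ← h, Measure.snd,
      AEMeasurable.map_map_of_aemeasurable measurable_snd.aemeasurable hXY]
    rfl
  refine ⟨?_, hX, hY⟩
  rw [indepFun_iff_map_prod_eq_prod_map_map hXY.fst hXY.snd, h, hX, hY]

theorem stmt_5_general {Ω : Type*} [MeasurableSpace Ω] (P : Measure Ω) [IsProbabilityMeasure P]
    (n k : ℕ) (hk : k ≤ n)
    (U : Fin n → Ω → ℝ) (hUmeas : ∀ i, Measurable (U i))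
    (hUindep : iIndepFun U P)
    (hUunif : ∀ i, Measure.map (U i) P = volume.restrict (Set.Icc (0 : ℝ) 1))
    (τ : Fin n → Ω → ℝ)
    (hτ : ∀ᵐ ω ∂P, StrictMono (fun i => τ i ω) ∧
      (∑ i, Measure.dirac (τ i ω)) = ∑ i, Measure.dirac (U i ω))
    (φ : Ω → Finset (Fin n)) (hφcard : ∀ ω, (φ ω).card = k)
    (hφunif : ∀ J : Finset (Fin n), J.card = k →
      P {ω | φ ω = J} = ((n.choose k : ℝ≥0∞))⁻¹)
    (hφindep : ∀ (J : Finset (Fin n)) (B : Set (Fin n → ℝ)), MeasurableSet B →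
      P ({ω | φ ω = J} ∩ {ω | (fun i => U i ω) ∈ B}) =
        P {ω | φ ω = J} * P {ω | (fun i => U i ω) ∈ B}) :
    IndepFun (fun ω => ∑ r ∈ φ ω, Measure.dirac (τ r ω))
      (fun ω => ∑ r ∈ (φ ω)ᶜ, Measure.dirac (τ r ω)) P ∧
    Measure.map (fun ω => ∑ r ∈ φ ω, Measure.dirac (τ r ω)) P = binProcLaw k 0 1 ∧
    Measure.map (fun ω => ∑ r ∈ (φ ω)ᶜ, Measure.dirac (τ r ω)) P = binProcLaw (n - k) 0 1 := by
  have : IsProbabilityMeasure (volume.restrict (Set.Icc (0 : ℝ) 1)) := ⟨by simp⟩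
  have hV : Measurable fun ω i => U i ω := measurable_pi_lambda _ hUmeas
  have hVlaw : P.map (fun ω i => U i ω) = Measure.pi fun _ => volume.restrict (Set.Icc 0 1) := by
    rw [hUindep.map_fun_eq_pi_map fun i => (hUmeas i).aemeasurable]
    simp_rw [hUunif]
  obtain ⟨hφV, hφVlaw⟩ := aemeasurable_and_map_eq_uniformSubsetLaw_prod hV hφcard hφunif hφindep
  have hsplit : (fun ω => splitSumDirac (φ ω) fun r => τ r ω) =ᵐ[P]
      fun ω => splitSumDirac (φ ω) (orderStatistics fun i => U i ω) := by
    filter_upwards [hτ] with ω ⟨hmono, hsum⟩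
    rw [eq_orderStatistics_of_sum_dirac_eq hmono.monotone hsum]
  have hG := measurable_splitSumDirac_orderStatistics (n := n) (α := ℝ)
  rw [binProcLaw_zero_one, binProcLaw_zero_one]
  refine indepFun_and_map_eq_of_map_prod_eq ((hG.comp_aemeasurable hφV).congr hsplit.symm) ?_
  change P.map (fun ω => splitSumDirac (φ ω) fun r => τ r ω) = _
  rw [Measure.map_congr hsplit]
  refine (AEMeasurable.map_map_of_aemeasurable hG.aemeasurable hφV).symm.trans ?_
  rw [hφVlaw, hVlaw, map_splitSumDirac_orderStatistics hk]

/-- Sampling property of binomial processes: if `τ_1 < … < τ_n` are the order statistics of `n`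
i.i.d. uniforms on `[0,1]` and `φ` is an independent uniformly random `k`-subset of `{1,…,n}`,
then the point processes `∑_{r∈φ} δ_{τ_r}` and `∑_{r∉φ} δ_{τ_r}` are independent uniform binomial
processes on `[0,1]` of orders `k` and `n-k`. -/
theorem stmt_5 {Ω : Type*} [MeasurableSpace Ω] (P : Measure Ω) [IsProbabilityMeasure P]
    (n k : ℕ) (hk : k ≤ n)
    (U : Fin n → Ω → ℝ) (hUmeas : ∀ i, Measurable (U i))
    (hUindep : iIndepFun U P)
    (hUunif : ∀ i, Measure.map (U i) P = volume.restrict (Set.Icc (0 : ℝ) 1))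
    (τ : Fin n → Ω → ℝ) (hτmeas : ∀ i, Measurable (τ i))
    (hτ : ∀ᵐ ω ∂P, StrictMono (fun i => τ i ω) ∧
      (∑ i, Measure.dirac (τ i ω)) = ∑ i, Measure.dirac (U i ω))
    (φ : Ω → Finset (Fin n)) (hφcard : ∀ ω, (φ ω).card = k)
    (hφunif : ∀ J : Finset (Fin n), J.card = k →
      P {ω | φ ω = J} = ((n.choose k : ℝ≥0∞))⁻¹)
    (hφindep : ∀ (J : Finset (Fin n)) (B : Set (Fin n → ℝ)), MeasurableSet B →
      P ({ω | φ ω = J} ∩ {ω | (fun i => U i ω) ∈ B}) =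
        P {ω | φ ω = J} * P {ω | (fun i => U i ω) ∈ B}) :
    IndepFun (fun ω => ∑ r ∈ φ ω, Measure.dirac (τ r ω))
      (fun ω => ∑ r ∈ (φ ω)ᶜ, Measure.dirac (τ r ω)) P ∧
    Measure.map (fun ω => ∑ r ∈ φ ω, Measure.dirac (τ r ω)) P = binProcLaw k 0 1 ∧
    Measure.map (fun ω => ∑ r ∈ (φ ω)ᶜ, Measure.dirac (τ r ω)) P = binProcLaw (n - k) 0 1 :=
  stmt_5_general P n k hk U hUmeas hUindep hUunif τ hτ φ hφcard hφunif hφindep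
end

section
/- Let (M, +, 0) be a commutative monoid equipped with a measurable-space structure making addition M × M → M measurable and {0} measurable. Let p ≥ 0, let N be a Poisson random variable with parameter p, and let X_1, X_2, … be i.i.d. random elements of M with common distribution ν̂, independent of N. Let f : M → ℝ be a bounded measurable function with f ≥ 0 and f(0) = 0, and write ‖f‖ for its supremum. Then | E[ f( X_1 + ⋯ + X_N ) ] − p·E[f(X_1)] | ≤ ‖f‖ · p², where the sum X_1 + ⋯ + X_N is taken to be 0 when N = 0. (This is the description, via the mixed-binomial representation, of the first-order approximation E f(ξ l) ≈ Eξ f for a Poisson process ξ on M with bounded intensity Eξ = p·ν̂ and ξ l = ∫ s ξ(ds).) -/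
/-!
Since `N` is independent of the sequence `X`, conditioning on `N` gives
`E f(X_1 + ⋯ + X_N) = ∑ₘ P(N = m) a_m` with `a_m = E f(X_1 + ⋯ + X_m) ∈ [0, ‖f‖]`,
`a_0 = f 0 = 0` and `a_1 = E f(X_1)`. Hence `E f(X_1 + ⋯ + X_N) - p a_1` is the difference
of the tail `∑_{m ≥ 2} P(N = m) a_m ∈ [0, ‖f‖ P(N ≥ 2)]` and `(1 - e^{-p}) p a_1 ∈ [0, ‖f‖ p²]`,
and `P(N ≥ 2) = 1 - e^{-p}(1 + p) ≤ p²`.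
-/

open MeasureTheory ProbabilityTheory Real Finset
open scoped NNReal Nat

lemma one_sub_exp_neg_mul_one_add_le_sq {x : ℝ} (hx : -1 ≤ x) :
    1 - exp (-x) * (1 + x) ≤ x ^ 2 := by
  have h : 1 - x ≤ exp (-x) := by linarith [add_one_le_exp (-x)]
  nlinarith [mul_le_mul_of_nonneg_right h (show 0 ≤ 1 + x by linarith)]

lemma abs_integral_poissonMeasure_sub_le {r : ℝ≥0} {a : ℕ → ℝ} {C : ℝ}
    (ha : ∀ n, a n ∈ Set.Icc 0 C) (ha0 : a 0 = 0) :
    |∫ n, a n ∂Po(r) - r * a 1| ≤ C * r ^ 2 := by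
  set w : ℕ → ℝ := fun n ↦ exp (-r) * r ^ n / (n)!
  have hw : HasSum w 1 := hasSum_one_poissonMeasure r
  have hw0 : ∀ n, 0 ≤ w n := fun n ↦ by positivity
  have hwa : Summable fun n ↦ w n * a n :=
    .of_nonneg_of_le (fun n ↦ mul_nonneg (hw0 n) (ha n).1)
      (fun n ↦ mul_le_mul_of_nonneg_left (ha n).2 (hw0 n)) (hw.summable.mul_right C)
  set tail := ∑' n, w (n + 2) * a (n + 2)
  have htail : tail ∈ Set.Icc 0 (C * r ^ 2) := by
    have hC : 0 ≤ C := (ha 0).1.trans (ha 0).2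
    have hmass : ∑' n, w (n + 2) = 1 - exp (-r) * (1 + r) := by
      have h := hw.summable.sum_add_tsum_nat_add 2
      have hw01 : w 0 + w 1 = exp (-r) * (1 + r) := by simp [w]; ring
      rw [hw.tsum_eq, sum_range_succ, sum_range_one] at h
      linarith
    refine ⟨tsum_nonneg fun n ↦ mul_nonneg (hw0 _) (ha _).1, ?_⟩
    calc tail ≤ ∑' n, w (n + 2) * C :=
          Summable.tsum_le_tsum (fun n ↦ mul_le_mul_of_nonneg_left (ha _).2 (hw0 _))
            ((summable_nat_add_iff 2).2 hwa) ((summable_nat_add_iff 2).2 hw.summable |>.mul_right C)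
      _ = C * (1 - exp (-r) * (1 + r)) := by rw [tsum_mul_right, hmass, mul_comm]
      _ ≤ C * r ^ 2 := by
          gcongr; exact one_sub_exp_neg_mul_one_add_le_sq (by linarith [r.coe_nonneg])
  have hhead : (1 - exp (-r)) * (r * a 1) ∈ Set.Icc 0 (C * r ^ 2) := by
    have h1 : 0 ≤ 1 - exp (-r) := by simp
    have h2 : 1 - exp (-r) ≤ r := by linarith [add_one_le_exp (-(r : ℝ))]
    obtain ⟨ha1, ha1C⟩ := ha 1
    constructor
    · exact mul_nonneg h1 (mul_nonneg r.coe_nonneg ha1)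
    · calc (1 - exp (-r)) * (r * a 1) ≤ r * (r * C) :=
            mul_le_mul h2 (mul_le_mul_of_nonneg_left ha1C r.coe_nonneg)
              (mul_nonneg r.coe_nonneg ha1) r.coe_nonneg
        _ = C * r ^ 2 := by ring
  have hsplit : ∫ n, a n ∂Po(r) = exp (-r) * r * a 1 + tail := by
    simp_rw [integral_poissonMeasure, smul_eq_mul]
    rw [← hwa.sum_add_tsum_nat_add 2]
    simp [w, sum_range_succ, ha0, tail]
  calc |∫ n, a n ∂Po(r) - r * a 1| = |tail - (1 - exp (-r)) * (r * a 1)| := by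
        rw [hsplit]; ring_nf
    _ ≤ C * r ^ 2 := abs_sub_le_of_nonneg_of_le htail.1 htail.2 hhead.1 hhead.2

theorem ProbabilityTheory.IndepFun.integral_comp_eq_integral_map_integral
    {Ω α β E : Type*} [MeasurableSpace Ω] [MeasurableSpace α] [MeasurableSpace β]
    [NormedAddCommGroup E] [NormedSpace ℝ E]
    {P : Measure Ω} [IsFiniteMeasure P] {X : Ω → α} {Y : Ω → β}
    (hXY : IndepFun X Y P) (hX : AEMeasurable X P) (hY : AEMeasurable Y P)
    {G : α × β → E} (hG : StronglyMeasurable G)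
    (hGi : Integrable (fun ω ↦ G (X ω, Y ω)) P) :
    ∫ ω, G (X ω, Y ω) ∂P = ∫ x, ∫ ω, G (x, Y ω) ∂P ∂(P.map X) := by
  have hlaw := hXY.map_prod_eq_prod_map_map hX hY
  have hGi' : Integrable G ((P.map X).prod (P.map Y)) := by
    rw [← hlaw]
    exact (integrable_map_measure hG.aestronglyMeasurable (hX.prodMk hY)).2 hGi
  rw [← integral_map (hX.prodMk hY) hG.aestronglyMeasurable, hlaw, integral_prod G hGi']
  congr with x
  exact integral_map hY (hG.comp_measurable measurable_prodMk_left).aestronglyMeasurable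

lemma hasLaw_poissonMeasure_of_measure_eq {Ω : Type*} [MeasurableSpace Ω] {P : Measure Ω}
    {N : Ω → ℕ} (hN : Measurable N) {r : ℝ≥0}
    (h : ∀ n : ℕ, P {ω | N ω = n} = ENNReal.ofReal (exp (-r) * r ^ n / (n)!)) :
    HasLaw N Po(r) P where
  aemeasurable := hN.aemeasurable
  map_eq := Measure.ext_of_singleton fun n ↦ by
    rw [Measure.map_apply hN (measurableSet_singleton n), poissonMeasure_singleton]
    exact h n

theorem stmt_10_general {Ω M : Type*} [MeasurableSpace Ω] (P : Measure Ω) [IsProbabilityMeasure P]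
    [AddCommMonoid M] [MeasurableSpace M] [MeasurableAdd₂ M]
    (p : ℝ) (hp : 0 ≤ p)
    (N : Ω → ℕ) (hN : Measurable N)
    (hNdist : ∀ m : ℕ, P {ω | N ω = m} =
      ENNReal.ofReal (Real.exp (-p) * p ^ m / (m.factorial : ℝ)))
    (X : ℕ → Ω → M) (hXmeas : ∀ i, Measurable (X i))
    (hNX : IndepFun N (fun ω => fun i => X i ω) P)
    (f : M → ℝ) (hfmeas : Measurable f) (hf0 : ∀ m, 0 ≤ f m) (hfz : f 0 = 0)
    (hbdd : BddAbove (Set.range f)) :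
    |(∫ ω, f (∑ i ∈ Finset.range (N ω), X i ω) ∂P) - p * ∫ ω, f (X 0 ω) ∂P| ≤
      sSup (Set.range f) * p ^ 2 := by
  lift p to ℝ≥0 using hp
  have hf : ∀ m, f m ∈ Set.Icc 0 (sSup (Set.range f)) :=
    fun m ↦ ⟨hf0 m, le_csSup hbdd ⟨m, rfl⟩⟩
  set G : ℕ × (ℕ → M) → ℝ := fun q ↦ f (∑ i ∈ range q.1, q.2 i)
  have hG : Measurable G := measurable_from_prod_countable_right fun n ↦
    hfmeas.comp (Finset.measurable_sum (range n) fun i _ ↦ measurable_pi_apply i)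
  have hV : Measurable fun ω i ↦ X i ω := measurable_pi_lambda _ hXmeas
  have hGint {Z : Ω → ℕ × (ℕ → M)} (hZ : Measurable Z) : Integrable (G ∘ Z) P :=
    .of_mem_Icc _ _ (hG.comp hZ).aemeasurable (ae_of_all _ fun ω ↦ hf _)
  rw [hNX.integral_comp_eq_integral_map_integral hN.aemeasurable hV.aemeasurable
      hG.stronglyMeasurable (hGint (hN.prodMk hV)),
    (hasLaw_poissonMeasure_of_measure_eq hN hNdist).map_eq]
  convert abs_integral_poissonMeasure_sub_le (a := fun n ↦ ∫ ω, G (n, fun i ↦ X i ω) ∂P)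
    (fun n ↦ (convex_Icc _ _).integral_mem isClosed_Icc (ae_of_all _ fun ω ↦ hf _)
      (hGint (measurable_const.prodMk hV))) (by simp [G, hfz]) using 3
  simp [G]

/-- First-order Poisson approximation: if `N` is Poisson with parameter `p`, the `X_i` are i.i.d.
random elements of a measurable commutative monoid `M`, independent of `N`, and `f : M → ℝ` is a
bounded nonnegative measurable function with `f 0 = 0`, then
`| E f(X_1 + ⋯ + X_N) − p · E f(X_1) | ≤ ‖f‖ · p²`. -/
theorem stmt_10 {Ω M : Type*} [MeasurableSpace Ω] (P : Measure Ω) [IsProbabilityMeasure P]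
    [AddCommMonoid M] [MeasurableSpace M] [MeasurableAdd₂ M]
    (h0 : MeasurableSet ({0} : Set M))
    (p : ℝ) (hp : 0 ≤ p)
    (N : Ω → ℕ) (hN : Measurable N)
    (hNdist : ∀ m : ℕ, P {ω | N ω = m} =
      ENNReal.ofReal (Real.exp (-p) * p ^ m / (m.factorial : ℝ)))
    (ν : Measure M) [IsProbabilityMeasure ν]
    (X : ℕ → Ω → M) (hXmeas : ∀ i, Measurable (X i))
    (hXindep : iIndepFun X P)
    (hXdist : ∀ i, Measure.map (X i) P = ν)
    (hNX : IndepFun N (fun ω => fun i => X i ω) P)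
    (f : M → ℝ) (hfmeas : Measurable f) (hf0 : ∀ m, 0 ≤ f m) (hfz : f 0 = 0)
    (hbdd : BddAbove (Set.range f)) :
    |(∫ ω, f (∑ i ∈ Finset.range (N ω), X i ω) ∂P) - p * ∫ ω, f (X 0 ω) ∂P| ≤
      sSup (Set.range f) * p ^ 2 :=
  stmt_10_general P p hp N hN hNdist X hXmeas hNX f hfmeas hf0 hfz hbdd
end

section
/- Let S and T be standard Borel spaces and fix d ≥ 1. For a finite measure μ on S × T and a point t = (t_1,…,t_d) ∈ T^d, let μ_t denote the restriction of μ to the set S × {t_1,…,t_d}ᶜ, i.e. μ_t(A) = μ(A ∩ (S × {t_1,…,t_d}ᶜ)). Then the map (μ, t) ↦ μ_t is product-measurable, where the space of finite measures on S × T carries the σ-field generated by the evaluation maps μ ↦ μ(A) for measurable A ⊆ S × T. -/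
open MeasureTheory ProbabilityTheory

/-- `p ↦ p.1` is a kernel with finite (not uniformly bounded) values, so measuring the sections of
a measurable subset of the product is measurable in the parameter. -/
theorem measurable_restrict_of_measurableSet_setOf_mem {α β : Type*} [MeasurableSpace α]
    [MeasurableSpace β] {s : β → Set α} (hs : MeasurableSet {q : β × α | q.2 ∈ s q.1}) :
    Measurable fun p : {μ : Measure α // IsFiniteMeasure μ} × β =>
      (p.1 : Measure α).restrict (s p.2) := by
  rw [Measure.measurable_measure]
  intro A hA
  simp_rw [Measure.restrict_apply hA]
  let κ : Kernel ({μ : Measure α // IsFiniteMeasure μ} × β) α :=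
    ⟨fun p => p.1, measurable_subtype_coe.comp measurable_fst⟩
  have hsection : MeasurableSet
      {q : ({μ : Measure α // IsFiniteMeasure μ} × β) × α | q.2 ∈ A ∩ s q.1.2} :=
    (measurable_snd hA).inter (hs.preimage (measurable_fst.snd.prodMk measurable_snd))
  exact Kernel.measurable_kernel_prodMk_left_of_finite (κ := κ) hsection fun p => p.1.2

theorem measurableSet_setOf_forall_ne {α ι : Type*} [MeasurableSpace α] [MeasurableEq α]
    [Countable ι] : MeasurableSet {q : (ι → α) × α | ∀ i, q.2 ≠ q.1 i} := by
  simp only [Set.ofPred_forall]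
  exact .iInter fun i => (measurableSet_eq_fun measurable_snd
    ((measurable_pi_apply i).comp measurable_fst)).compl

theorem stmt_14_general {S T : Type*} [MeasurableSpace S]
    [MeasurableSpace T] [StandardBorelSpace T] (d : ℕ) :
    Measurable (fun p : {μ : Measure (S × T) // IsFiniteMeasure μ} × (Fin d → T) =>
      (p.1 : Measure (S × T)).restrict {st : S × T | ∀ i, st.2 ≠ p.2 i}) := by
  refine measurable_restrict_of_measurableSet_setOf_mem
    (s := fun t : Fin d → T => {st : S × T | ∀ i, st.2 ≠ t i}) ?_
  exact measurableSet_setOf_forall_ne.preimage (measurable_fst.prodMk measurable_snd.snd)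

/-- For standard Borel spaces `S`, `T`, the map sending a finite measure `μ` on `S × T` and a
tuple `t ∈ T^d` to the restriction of `μ` to `S × {t_1,…,t_d}ᶜ` is product-measurable. -/
theorem stmt_14 {S T : Type*} [MeasurableSpace S] [StandardBorelSpace S]
    [MeasurableSpace T] [StandardBorelSpace T] (d : ℕ) (hd : 1 ≤ d) :
    Measurable (fun p : {μ : Measure (S × T) // IsFiniteMeasure μ} × (Fin d → T) =>
      (p.1 : Measure (S × T)).restrict {st : S × T | ∀ i, st.2 ≠ p.2 i}) :=
  stmt_14_general d
end

section
/- Let S be a measurable space, T a standard Borel space, ν a finite measure on S, and κ′, κ″ two bounded kernels from S to T (i.e. kernels with sup_s κ′_s(T) < ∞ and sup_s κ″_s(T) < ∞). Then: (i) the function s ↦ ‖κ′_s − κ″_s‖ is measurable; and (ii) ‖ν ⊗ κ′ − ν ⊗ κ″‖ = ∫_S ‖κ′_s − κ″_s‖ ν(ds), where ν ⊗ κ denotes the measure on S × T given by (ν ⊗ κ)(A) = ∫_S κ_s({t : (s,t) ∈ A}) ν(ds). -/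
open MeasureTheory ProbabilityTheory
open scoped ENNReal

/-!
Dominate both kernels by `η = κ′ + κ″` and take kernel Radon–Nikodym derivatives `f = dκ′/dη`,
`g = dκ″/dη`, jointly measurable on `S × T` because `T` is countably generated. For measures
with densities `f, g` the Jordan decomposition of the difference is
`(f - g)·μ - (g - f)·μ`, so its total variation is `∫ |f - g| dμ`. Applied to each `κ′_s, κ″_s`
(with respect to `η_s`) and to `ν ⊗ κ′, ν ⊗ κ″`, whose densities with respect to `ν ⊗ η` are the
same functions `f, g`, both sides of the identity become the same iterated integral of `|f - g|`.
-/

/-- The total variation distance between two finite measures, i.e. the total variation norm of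
the signed measure `α - β`. -/
noncomputable def tvDist {T : Type*} [MeasurableSpace T] (α β : Measure T)
    [IsFiniteMeasure α] [IsFiniteMeasure β] : ℝ≥0∞ :=
  (α.toSignedMeasure - β.toSignedMeasure).totalVariation Set.univ

namespace MeasureTheory

variable {T : Type*} [MeasurableSpace T]

lemma SignedMeasure.totalVariation_toSignedMeasure_sub_of_mutuallySingular {μ ν : Measure T}
    [IsFiniteMeasure μ] [IsFiniteMeasure ν] (h : μ ⟂ₘ ν) :
    (μ.toSignedMeasure - ν.toSignedMeasure).totalVariation = μ + ν :=
  congrArg (fun j : JordanDecomposition T => j.posPart + j.negPart)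
    (JordanDecomposition.toJordanDecomposition_toSignedMeasure ⟨μ, ν, h⟩)

lemma Measure.toSignedMeasure_sub_eq_of_add_eq {α β α' β' : Measure T}
    [IsFiniteMeasure α] [IsFiniteMeasure β] [IsFiniteMeasure α'] [IsFiniteMeasure β']
    (h : α + β' = α' + β) :
    α.toSignedMeasure - β.toSignedMeasure = α'.toSignedMeasure - β'.toSignedMeasure := by
  rw [sub_eq_sub_iff_add_eq_add, ← Measure.toSignedMeasure_add, ← Measure.toSignedMeasure_add]
  exact Measure.toSignedMeasure_congr h

lemma withDensity_tsub_mutuallySingular (μ : Measure T) {f g : T → ℝ≥0∞}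
    (hf : Measurable f) (hg : Measurable g) :
    μ.withDensity (f - g) ⟂ₘ μ.withDensity (g - f) := by
  refine ⟨{t | f t ≤ g t}, measurableSet_le hf hg, ?_, ?_⟩
  · rw [withDensity_apply_eq_zero (hf.sub hg)]
    convert measure_empty (μ := μ)
    ext t
    simp [tsub_eq_zero_iff_le]
  · rw [withDensity_apply_eq_zero (hg.sub hf)]
    convert measure_empty (μ := μ)
    ext t
    simpa [tsub_eq_zero_iff_le] using le_of_lt

lemma tvDist_eq_lintegral_of_withDensity_eq {μ : Measure T} {f g : T → ℝ≥0∞}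
    (hf : Measurable f) (hg : Measurable g) {α β : Measure T} [IsFiniteMeasure α]
    [IsFiniteMeasure β] (hα : μ.withDensity f = α) (hβ : μ.withDensity g = β) :
    tvDist α β = ∫⁻ t, (f t - g t) + (g t - f t) ∂μ := by
  subst hα hβ
  have : IsFiniteMeasure (μ.withDensity (f - g)) :=
    isFiniteMeasure_of_le _ (withDensity_mono (.of_forall fun _ => tsub_le_self))
  have : IsFiniteMeasure (μ.withDensity (g - f)) :=
    isFiniteMeasure_of_le _ (withDensity_mono (.of_forall fun _ => tsub_le_self))
  have hsum : μ.withDensity f + μ.withDensity (g - f) = μ.withDensity (f - g) + μ.withDensity g := by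
    rw [← withDensity_add_left hf, ← withDensity_add_right _ hg]
    congr 1 with t
    simp only [Pi.add_apply, Pi.sub_apply, add_tsub_eq_max, tsub_add_eq_max]
  rw [tvDist, Measure.toSignedMeasure_sub_eq_of_add_eq hsum,
    SignedMeasure.totalVariation_toSignedMeasure_sub_of_mutuallySingular
      (withDensity_tsub_mutuallySingular μ hf hg),
    Measure.add_apply, withDensity_apply _ .univ, withDensity_apply _ .univ,
    ← lintegral_add_left (hf.sub hg), Measure.restrict_univ]
  rfl

end MeasureTheory

namespace ProbabilityTheory.Kernel

variable {S T : Type*} [MeasurableSpace S] [MeasurableSpace T]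
  [MeasurableSpace.CountableOrCountablyGenerated S T]

lemma withDensity_rnDeriv_eq_self {κ η : Kernel S T} [IsFiniteKernel κ] [IsFiniteKernel η]
    (h : ∀ s, κ s ≪ η s) : η.withDensity (κ.rnDeriv η) = κ :=
  ext fun s => withDensity_rnDeriv_eq (h s)

lemma compProd_eq_withDensity_rnDeriv (ν : Measure S) [SFinite ν] {κ η : Kernel S T}
    [IsFiniteKernel κ] [IsFiniteKernel η] (h : ∀ s, κ s ≪ η s) :
    (ν ⊗ₘ η).withDensity (fun p => κ.rnDeriv η p.1 p.2) = ν ⊗ₘ κ := by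
  have : IsSFiniteKernel (η.withDensity (κ.rnDeriv η)) := by
    rw [withDensity_rnDeriv_eq_self h]; infer_instance
  rw [← Measure.compProd_withDensity (measurable_rnDeriv κ η), withDensity_rnDeriv_eq_self h]

lemma tvDist_apply_eq_lintegral_rnDeriv {κ' κ'' η : Kernel S T} [IsFiniteKernel κ']
    [IsFiniteKernel κ''] [IsFiniteKernel η] (h' : ∀ s, κ' s ≪ η s) (h'' : ∀ s, κ'' s ≪ η s)
    (s : S) :
    tvDist (κ' s) (κ'' s) = ∫⁻ t, (κ'.rnDeriv η s t - κ''.rnDeriv η s t)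
      + (κ''.rnDeriv η s t - κ'.rnDeriv η s t) ∂η s := by
  refine tvDist_eq_lintegral_of_withDensity_eq (measurable_rnDeriv_right _ _ s)
    (measurable_rnDeriv_right _ _ s) ?_ ?_
  · rw [← Kernel.withDensity_apply _ (measurable_rnDeriv _ _), withDensity_rnDeriv_eq_self h']
  · rw [← Kernel.withDensity_apply _ (measurable_rnDeriv _ _), withDensity_rnDeriv_eq_self h'']

end ProbabilityTheory.Kernel

/-- For a finite measure `ν` on `S` and bounded kernels `κ′, κ″` from `S` to a standard Borel
space `T`: the pointwise total variation `s ↦ ‖κ′_s − κ″_s‖` is measurable, and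
`‖ν ⊗ κ′ − ν ⊗ κ″‖ = ∫ ‖κ′_s − κ″_s‖ ν(ds)`. -/
theorem stmt_15 {S T : Type*} [MeasurableSpace S] [MeasurableSpace T] [StandardBorelSpace T]
    (ν : Measure S) [IsFiniteMeasure ν]
    (κ' κ'' : Kernel S T) [IsFiniteKernel κ'] [IsFiniteKernel κ''] :
    Measurable (fun s => tvDist (κ' s) (κ'' s)) ∧
    tvDist (ν ⊗ₘ κ') (ν ⊗ₘ κ'') = ∫⁻ s, tvDist (κ' s) (κ'' s) ∂ν := by
  set η := κ' + κ''
  have h' : ∀ s, κ' s ≪ η s := fun s => by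
    simpa [η] using Measure.AbsolutelyContinuous.rfl.add_right (κ'' s)
  have h'' : ∀ s, κ'' s ≪ η s := fun s => by
    simpa [η] using Measure.AbsolutelyContinuous.rfl.add_right' (κ' s)
  have hf := Kernel.measurable_rnDeriv κ' η
  have hg := Kernel.measurable_rnDeriv κ'' η
  have hF : Measurable fun p : S × T => (κ'.rnDeriv η p.1 p.2 - κ''.rnDeriv η p.1 p.2)
      + (κ''.rnDeriv η p.1 p.2 - κ'.rnDeriv η p.1 p.2) :=
    (hf.sub hg).add (hg.sub hf)
  simp_rw [Kernel.tvDist_apply_eq_lintegral_rnDeriv h' h'']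
  refine ⟨hF.lintegral_kernel_prod_right', ?_⟩
  rw [tvDist_eq_lintegral_of_withDensity_eq hf hg (Kernel.compProd_eq_withDensity_rnDeriv ν h')
    (Kernel.compProd_eq_withDensity_rnDeriv ν h''), Measure.lintegral_compProd hF]
end
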